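/- (Reachability conservation.) Assume (N₁, m₁) ▷_E (N₂, m₂) and let F₂ be the E-transform of formula F₁ on N₁. Then F₁ is reachable in (N₁, m₁) (i.e., some reachable marking satisfies F₁) if and only if F₂ is reachable in (N₂, m₂). -/

import Mathlib

/-- A labeled Petri net over a global type `V` of variables/places and labels in
`L` (`none` is the silent label `τ`).  The net only uses the places in `places`:
the flow functions vanish outside of it. -/
structure LNet (V L : Type) where
  T : Type
  places : Set V
  Pre : T → V → ℕ
  Post : T → V → ℕ
  pre_supp : ∀ t p, p ∉ places → Pre t p = 0
  post_supp : ∀ t p, p ∉ places → Post t p = 0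
  label : T → Option L

namespace LNet

variable {V L : Type}

/-- Transition `t` is enabled at marking `m`. -/
def Enabled (N : LNet V L) (m : V → ℕ) (t : N.T) : Prop :=
  ∀ p, N.Pre t p ≤ m p

/-- `m →t m'` : `t` is enabled at `m` and `m' = m - Pre(t) + Post(t)` (pointwise). -/
def Fire (N : LNet V L) (m : V → ℕ) (t : N.T) (m' : V → ℕ) : Prop :=
  N.Enabled m t ∧ ∀ p, m' p = m p - N.Pre t p + N.Post t p

/-- `m ⇒ρ m'` : the firing sequence `ρ` fires from `m` to `m'`. -/
def FireSeq (N : LNet V L) : (V → ℕ) → List N.T → (V → ℕ) → Prop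
  | m, [], m' => m' = m
  | m, t :: ρ, m'' => ∃ m', N.Fire m t m' ∧ N.FireSeq m' ρ m''

/-- Reachability from `m₀`. -/
def Reach (N : LNet V L) (m₀ m : V → ℕ) : Prop :=
  ∃ ρ, N.FireSeq m₀ ρ m

/-- The observation sequence of a firing sequence (silent transitions erased). -/
def Obs (N : LNet V L) (ρ : List N.T) : List L :=
  ρ.filterMap N.label

end LNet

/-- `m₁ ⊎ m₂ ⊨ E` : the two markings are compatible and, jointly, satisfy the
constraint system `E` (i.e. `E ∧ m̲₁ ∧ m̲₂` is satisfiable: some valuation of all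
the variables agrees with `m₁` on `P₁`, with `m₂` on `P₂` and satisfies `E`). -/
def JSat {V L : Type} (N₁ N₂ : LNet V L) (E : (V → ℕ) → Prop)
    (m₁ m₂ : V → ℕ) : Prop :=
  ∃ v : V → ℕ, (∀ p ∈ N₁.places, v p = m₁ p) ∧ (∀ p ∈ N₂.places, v p = m₂ p) ∧ E v

/-- `(N₁, m₁) ⊒_E (N₂, m₂)` : `(N₂, m₂)` is an `E`-abstraction of `(N₁, m₁)`,
conditions (A1) and (A2). -/
def EAbs {V L : Type} (N₁ : LNet V L) (m₁ : V → ℕ) (N₂ : LNet V L) (m₂ : V → ℕ)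
    (E : (V → ℕ) → Prop) : Prop :=
  -- (A1) the initial markings jointly satisfy `E`
  JSat N₁ N₂ E m₁ m₂ ∧
  -- (A2)
  ∀ ρ₁ m₁', N₁.FireSeq m₁ ρ₁ m₁' →
    (∃ m₂' : V → ℕ, JSat N₁ N₂ E m₁' m₂') ∧
    ∀ m₂' : V → ℕ, JSat N₁ N₂ E m₁' m₂' →
      ∃ ρ₂ m₂'', N₂.FireSeq m₂ ρ₂ m₂'' ∧ (∀ p ∈ N₂.places, m₂'' p = m₂' p) ∧
        N₁.Obs ρ₁ = N₂.Obs ρ₂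

/-- `(N₁, m₁) ▷_E (N₂, m₂)` : `E`-abstraction equivalence (abstraction in both
directions). -/
def EEquiv {V L : Type} (N₁ : LNet V L) (m₁ : V → ℕ) (N₂ : LNet V L) (m₂ : V → ℕ)
    (E : (V → ℕ) → Prop) : Prop :=
  EAbs N₁ m₁ N₂ m₂ E ∧ EAbs N₂ m₂ N₁ m₁ E

/-- `F` is a formula whose (free) variables all belong to `S`: its truth value
only depends on the values of the variables in `S`. -/
def FormulaDependsOn {V : Type} (F : (V → ℕ) → Prop) (S : Set V) : Prop :=
  ∀ v w : V → ℕ, (∀ x ∈ S, v x = w x) → (F v ↔ F w)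

/-- The `E`-transform `F₂(ȳ) ≜ ∃x̄. Ẽ(x̄, ȳ) ∧ F₁(x̄)` of a formula `F₁` with
variables in `P₁`: semantically, `m₂` satisfies `F₂` when some marking `m₁`
over `P₁` satisfies `F₁` and `m₁ ⊎ m₂ ⊨ E`. -/
def ETransform {V L : Type} (N₁ N₂ : LNet V L) (E : (V → ℕ) → Prop)
    (F₁ : (V → ℕ) → Prop) : (V → ℕ) → Prop :=
  fun m₂ => ∃ m₁ : V → ℕ, JSat N₁ N₂ E m₁ m₂ ∧ F₁ m₁

/-- `φ` is reachable in `(N, m₀)` : some reachable marking satisfies it. -/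
def Reachable {V L : Type} (N : LNet V L) (m₀ : V → ℕ) (φ : (V → ℕ) → Prop) : Prop :=
  ∃ m, N.Reach m₀ m ∧ φ m

/-! Only condition (A2) is needed, in both directions: a reachable marking of one net that is
`E`-compatible with some marking of the other is matched, on the other net's places, by a
reachable marking of the other net. Going back from `N₂` to `N₁`, the matched marking agrees
on `P₁` with the witness of the `E`-transform, and this is all `F₁` can see. -/

section

variable {V L : Type} {N₁ N₂ : LNet V L} {E : (V → ℕ) → Prop}

theorem JSat.symm {m₁ m₂ : V → ℕ} (h : JSat N₁ N₂ E m₁ m₂) : JSat N₂ N₁ E m₂ m₁ :=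
  let ⟨v, hv₁, hv₂, hE⟩ := h
  ⟨v, hv₂, hv₁, hE⟩

theorem JSat.congr_right {m₁ m₂ m₂' : V → ℕ} (h : JSat N₁ N₂ E m₁ m₂)
    (hm : ∀ p ∈ N₂.places, m₂' p = m₂ p) : JSat N₁ N₂ E m₁ m₂' :=
  let ⟨v, hv₁, hv₂, hE⟩ := h
  ⟨v, hv₁, fun p hp => (hv₂ p hp).trans (hm p hp).symm, hE⟩

namespace EAbs

variable {m₁ m₂ : V → ℕ}

theorem exists_reach_eqOn_places (h : EAbs N₁ m₁ N₂ m₂ E) {m₁' m₂' : V → ℕ}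
    (hreach : N₁.Reach m₁ m₁') (hJ : JSat N₁ N₂ E m₁' m₂') :
    ∃ m₂'', N₂.Reach m₂ m₂'' ∧ ∀ p ∈ N₂.places, m₂'' p = m₂' p :=
  let ⟨ρ₁, hρ₁⟩ := hreach
  let ⟨ρ₂, m₂'', hρ₂, hagree, _⟩ := (h.2 ρ₁ m₁' hρ₁).2 m₂' hJ
  ⟨m₂'', ⟨ρ₂, hρ₂⟩, hagree⟩

theorem reachable_eTransform (h : EAbs N₁ m₁ N₂ m₂ E) {F₁ : (V → ℕ) → Prop}
    (hF : Reachable N₁ m₁ F₁) : Reachable N₂ m₂ (ETransform N₁ N₂ E F₁) := by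
  obtain ⟨m₁', ⟨ρ₁, hρ₁⟩, hF₁⟩ := hF
  obtain ⟨m₂', hJ⟩ := (h.2 ρ₁ m₁' hρ₁).1
  obtain ⟨m₂'', hreach₂, hagree⟩ := h.exists_reach_eqOn_places ⟨ρ₁, hρ₁⟩ hJ
  exact ⟨m₂'', hreach₂, m₁', hJ.congr_right hagree, hF₁⟩

theorem reachable_of_reachable_eTransform (h : EAbs N₂ m₂ N₁ m₁ E) {F₁ : (V → ℕ) → Prop}
    (hvars : FormulaDependsOn F₁ N₁.places)
    (hF : Reachable N₂ m₂ (ETransform N₁ N₂ E F₁)) : Reachable N₁ m₁ F₁ := by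
  obtain ⟨m₂', hreach, m₁', hJ, hF₁⟩ := hF
  obtain ⟨m₁'', hreach₁, hagree⟩ := h.exists_reach_eqOn_places hreach hJ.symm
  exact ⟨m₁'', hreach₁, (hvars m₁'' m₁' hagree).mpr hF₁⟩

end EAbs

end

/-- (Reachability conservation.)  Assume `(N₁, m₁) ▷_E (N₂, m₂)` and let `F₂` be
the `E`-transform of a formula `F₁` whose variables are in `P₁`.  Then `F₁` is
reachable in `(N₁, m₁)` iff `F₂` is reachable in `(N₂, m₂)`. -/
theorem reachability_conservation {V L : Type} (N₁ N₂ : LNet V L) (m₁ m₂ : V → ℕ)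
    (E : (V → ℕ) → Prop) (F₁ : (V → ℕ) → Prop)
    (hvars : FormulaDependsOn F₁ N₁.places)
    (h : EEquiv N₁ m₁ N₂ m₂ E) :
    Reachable N₁ m₁ F₁ ↔ Reachable N₂ m₂ (ETransform N₁ N₂ E F₁) :=
  ⟨h.1.reachable_eTransform, h.2.reachable_of_reachable_eTransform hvars⟩
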